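/- arXiv:2306.11438 — 10 statements merged into one kernel-verified Lean document; each statement's English description precedes it below -/
import Mathlib

section
/- Let B̃ = (b_{ij}) be an m×n mutation matrix and k ∈ {1,…,n}. Then E_{k,+}^{B̃} · B̃ · F_{k,+}^{B̃} = E_{k,-}^{B̃} · B̃ · F_{k,-}^{B̃}, and this common product equals the mutated matrix μ_k(B̃). In particular the product E_{k,ε}^{B̃} B̃ F_{k,ε}^{B̃} is independent of the choice of sign ε ∈ {+,-}. -/
open Matrix BigOperators

namespace ClusterF

/-- The positive part `[a]₊ = max a 0` of an integer. -/
def pp (a : ℤ) : ℤ := max a 0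

variable {m n : ℕ}

/-- The principal part (top `n × n` submatrix) of an `m × n` matrix. -/
def prin (h : n ≤ m) (B : Matrix (Fin m) (Fin n) ℤ) : Matrix (Fin n) (Fin n) ℤ :=
  Matrix.of fun i j => B (Fin.castLE h i) j

/-- `B̃` is a mutation matrix: its principal part is skew-symmetrizable, i.e. there is a
diagonal integer matrix with positive diagonal entries `S` with `S * B` skew-symmetric. -/
def IsMutationMatrix (h : n ≤ m) (B : Matrix (Fin m) (Fin n) ℤ) : Prop :=
  ∃ S : Fin n → ℤ, (∀ i, 0 < S i) ∧
    (Matrix.diagonal S * prin h B)ᵀ = -(Matrix.diagonal S * prin h B)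

/-- The mutation `μ_k(B̃)` of an `m × n` matrix in direction `k`. -/
def mutB (h : n ≤ m) (B : Matrix (Fin m) (Fin n) ℤ) (k : Fin n) :
    Matrix (Fin m) (Fin n) ℤ :=
  Matrix.of fun i j =>
    if i = Fin.castLE h k ∨ j = k then -(B i j)
    else B i j + pp (B i k) * pp (B (Fin.castLE h k) j)
      - pp (-(B i k)) * pp (-(B (Fin.castLE h k) j))

/-- The `m × m` matrix `E_{k,ε}^{B̃}`: the identity with its `k`-th column replaced by the
column with entry `-1` in position `k` and `[-ε b_{ik}]₊` in positions `i ≠ k`. -/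
def Emat (h : n ≤ m) (B : Matrix (Fin m) (Fin n) ℤ) (k : Fin n) (ε : ℤ) :
    Matrix (Fin m) (Fin m) ℤ :=
  Matrix.of fun i j =>
    if j = Fin.castLE h k then
      (if i = Fin.castLE h k then -1 else pp (-(ε * B i k)))
    else if i = j then 1 else 0

/-- The `n × n` matrix `F_{k,ε}^{B̃}`: the identity with its `k`-th row replaced by the
row with entry `-1` in position `k` and `[ε b_{ki}]₊` in positions `i ≠ k`. -/
def Fmat (h : n ≤ m) (B : Matrix (Fin m) (Fin n) ℤ) (k : Fin n) (ε : ℤ) :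
    Matrix (Fin n) (Fin n) ℤ :=
  Matrix.of fun i j =>
    if i = k then (if j = k then -1 else pp (ε * B (Fin.castLE h k) j))
    else if i = j then 1 else 0

/-- The `n × m` matrix `(S | 0)`. -/
def typeMat (h : n ≤ m) (S : Fin n → ℤ) : Matrix (Fin n) (Fin m) ℤ :=
  Matrix.of fun i j => if j = Fin.castLE h i then S i else 0

/-- The Y-tropical mutation of `g ∈ ℤ^m` in direction `k`, with respect to `B̂ = -B̃ᵀ`
(so `b̂_{ki} = -b_{ik}`):  `g'_k = -g_k` and
`g'_i = g_i + [b̂_{ki}]₊ g_k - b̂_{ki}[g_k]₊` for `i ≠ k`. -/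
def yTrop (h : n ≤ m) (B : Matrix (Fin m) (Fin n) ℤ) (k : Fin n) (g : Fin m → ℤ) :
    Fin m → ℤ :=
  fun i =>
    if i = Fin.castLE h k then -(g (Fin.castLE h k))
    else g i + pp (-(B i k)) * g (Fin.castLE h k) - (-(B i k)) * pp (g (Fin.castLE h k))

/-- The X-tropical mutation of `a ∈ ℤ^m` in direction `k` with respect to `B̃`:
`a'_i = a_i` for `i ≠ k` and
`a'_k = -a_k + max (Σ_j [b_{jk}]₊ a_j) (Σ_j [-b_{jk}]₊ a_j)`. -/
def xTrop (h : n ≤ m) (B : Matrix (Fin m) (Fin n) ℤ) (k : Fin n) (a : Fin m → ℤ) :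
    Fin m → ℤ :=
  fun i =>
    if i = Fin.castLE h k then
      -(a i) + max (∑ j, pp (B j k) * a j) (∑ j, pp (-(B j k)) * a j)
    else a i

lemma EB_apply (h : n ≤ m) (B : Matrix (Fin m) (Fin n) ℤ) (k : Fin n) (ε : ℤ)
    (i : Fin m) (j : Fin n) :
    (Emat h B k ε * B) i j =
      (if i = Fin.castLE h k then -1 else pp (-(ε * B i k))) * B (Fin.castLE h k) j
        + (if i = Fin.castLE h k then 0 else B i j) := by
  rw [Matrix.mul_apply]
  by_cases hi : i = Fin.castLE h k
  · rw [Finset.sum_congr rfl (g := fun l => if l = Fin.castLE h k then -B (Fin.castLE h k) j else 0)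
      (fun l _ => by
        simp only [Emat, Matrix.of_apply, hi]
        split_ifs <;> subst_vars <;> simp_all)]
    simp [hi]
  · rw [Finset.sum_congr rfl (g := fun l =>
      (if l = Fin.castLE h k then pp (-(ε * B i k)) * B (Fin.castLE h k) j else 0)
      + (if l = i then B i j else 0))
      (fun l _ => by
        simp only [Emat, Matrix.of_apply]
        split_ifs <;> subst_vars <;> simp_all)]
    rw [Finset.sum_add_distrib]
    simp [hi]

lemma mulF_apply (h : n ≤ m) (B : Matrix (Fin m) (Fin n) ℤ) (k : Fin n) (ε : ℤ)
    (C : Matrix (Fin m) (Fin n) ℤ) (i : Fin m) (j : Fin n) :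
    (C * Fmat h B k ε) i j =
      C i k * (if j = k then -1 else pp (ε * B (Fin.castLE h k) j))
        + (if j = k then 0 else C i j) := by
  rw [Matrix.mul_apply]
  by_cases hj : j = k
  · rw [Finset.sum_congr rfl (g := fun l => if l = k then -(C i k) else 0)
      (fun l _ => by
        simp only [Fmat, Matrix.of_apply, hj]
        split_ifs <;> subst_vars <;> simp_all)]
    simp [hj]
  · rw [Finset.sum_congr rfl (g := fun l =>
      (if l = k then C i k * pp (ε * B (Fin.castLE h k) j) else 0)
      + (if l = j then C i j else 0))
      (fun l _ => by
        simp only [Fmat, Matrix.of_apply]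
        split_ifs <;> subst_vars <;> simp_all)]
    rw [Finset.sum_add_distrib]
    simp [hj]

lemma pp_of_nonneg {a : ℤ} (ha : 0 ≤ a) : pp a = a := max_eq_left ha
lemma pp_of_nonpos {a : ℤ} (ha : a ≤ 0) : pp a = 0 := max_eq_right ha

lemma key1 (a b : ℤ) : a * pp b + pp (-a) * b = pp a * pp b - pp (-a) * pp (-b) := by
  rcases le_total 0 a with ha | ha <;> rcases le_total 0 b with hb | hb <;>
    simp [pp_of_nonneg, pp_of_nonpos, ha, hb, neg_nonpos.2, neg_nonneg.2] <;> ring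

lemma key2 (a b : ℤ) : a * pp (-b) + pp a * b = pp a * pp b - pp (-a) * pp (-b) := by
  rcases le_total 0 a with ha | ha <;> rcases le_total 0 b with hb | hb <;>
    simp [pp_of_nonneg, pp_of_nonpos, ha, hb, neg_nonpos.2, neg_nonneg.2] <;> ring

lemma diag_zero (h : n ≤ m) (B : Matrix (Fin m) (Fin n) ℤ)
    (hB : IsMutationMatrix h B) (k : Fin n) : B (Fin.castLE h k) k = 0 := by
  obtain ⟨S, hS, hskew⟩ := hB
  have h1 := congrFun (congrFun hskew k) k
  simp [Matrix.diagonal_mul, prin] at h1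
  have h2 : S k * B (Fin.castLE h k) k = 0 := by linarith
  exact (mul_eq_zero.1 h2).resolve_left (hS k).ne'

/-- For an m×n mutation matrix B̃ and k ∈ {1,…,n}, the products
E_{k,+} B̃ F_{k,+} and E_{k,-} B̃ F_{k,-} both equal μ_k(B̃); in particular
E_{k,ε} B̃ F_{k,ε} is independent of the sign ε. -/
theorem stmt0 {m n : ℕ} (h : n ≤ m) (B : Matrix (Fin m) (Fin n) ℤ)
    (hB : IsMutationMatrix h B) (k : Fin n) :
    Emat h B k 1 * B * Fmat h B k 1 = mutB h B k ∧
      Emat h B k (-1) * B * Fmat h B k (-1) = mutB h B k := by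
  have hkk : B (Fin.castLE h k) k = 0 := diag_zero h B hB k
  constructor <;>
  · ext i j
    rw [mulF_apply, EB_apply, EB_apply]
    by_cases hi : i = Fin.castLE h k <;> by_cases hj : j = k <;>
      simp only [mutB, Matrix.of_apply, hi, hj, if_true, if_false, or_true, true_or,
        eq_self_iff_true, or_false, false_or, hkk, one_mul, neg_mul, neg_neg,
        mul_zero, zero_mul, add_zero, zero_add, mul_neg, mul_one, neg_zero] <;>
      first
        | rfl
        | (simp [hi, hj, hkk]; try ring)
        | linear_combination key1 (B i k) (B (Fin.castLE h k) j)
        | linear_combination key2 (B i k) (B (Fin.castLE h k) j)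

end ClusterF
end

section
/- Mutation preserves rank: for any m×n mutation matrix B̃ and any k ∈ {1,…,n}, the rank of μ_k(B̃) equals the rank of B̃. -/
open Matrix BigOperators

namespace ClusterF

variable {m n : ℕ}

lemma Emat_mul {p : ℕ} (h : n ≤ m) (B : Matrix (Fin m) (Fin n) ℤ) (k : Fin n) (ε : ℤ)
    (A : Matrix (Fin m) (Fin p) ℤ) (i : Fin m) (j : Fin p) :
    (Emat h B k ε * A) i j = A i j +
      (if i = Fin.castLE h k then -2 else pp (-(ε * B i k))) * A (Fin.castLE h k) j := by
  rw [Matrix.mul_apply]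
  have : ∀ q : Fin m, Emat h B k ε i q * A q j =
      (if q = i then A q j else 0) +
      (if q = Fin.castLE h k then
        (if i = Fin.castLE h k then -2 else pp (-(ε * B i k))) * A q j else 0) := by
    intro q
    simp only [Emat, Matrix.of_apply]
    by_cases hq : q = Fin.castLE h k
    · rw [if_pos hq, if_pos hq]
      by_cases hi : i = Fin.castLE h k
      · have hqi : q = i := hq.trans hi.symm
        rw [if_pos hi, if_pos hi, if_pos hqi]; ring
      · have hqi : ¬ q = i := fun hh => hi (hh ▸ hq)
        rw [if_neg hi, if_neg hi, if_neg hqi]; ring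
    · rw [if_neg hq, if_neg hq, add_zero]
      by_cases hqi : q = i
      · rw [if_pos hqi.symm, if_pos hqi, one_mul]
      · rw [if_neg (fun hh => hqi hh.symm), if_neg hqi, zero_mul]
  simp_rw [this, Finset.sum_add_distrib, Finset.sum_ite_eq', Finset.mem_univ, if_true]

lemma mul_Fmat {p : ℕ} (h : n ≤ m) (B : Matrix (Fin m) (Fin n) ℤ) (k : Fin n) (ε : ℤ)
    (A : Matrix (Fin p) (Fin n) ℤ) (i : Fin p) (j : Fin n) :
    (A * Fmat h B k ε) i j = A i j +
      A i k * (if j = k then -2 else pp (ε * B (Fin.castLE h k) j)) := by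
  rw [Matrix.mul_apply]
  have : ∀ q : Fin n, A i q * Fmat h B k ε q j =
      (if q = j then A i q else 0) +
      (if q = k then
        A i q * (if j = k then -2 else pp (ε * B (Fin.castLE h k) j)) else 0) := by
    intro q
    simp only [Fmat, Matrix.of_apply]
    by_cases hq : q = k
    · rw [if_pos hq, if_pos hq]
      by_cases hj : j = k
      · have hqj : q = j := hq.trans hj.symm
        rw [if_pos hj, if_pos hj, if_pos hqj]; ring
      · have hqj : ¬ q = j := fun hh => hj (hh.symm.trans hq)
        rw [if_neg hj, if_neg hj, if_neg hqj]; ring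
    · rw [if_neg hq, if_neg hq, add_zero]
      by_cases hqj : q = j
      · rw [if_pos hqj, if_pos hqj, mul_one]
      · rw [if_neg hqj, if_neg hqj, mul_zero]
  simp_rw [this, Finset.sum_add_distrib, Finset.sum_ite_eq', Finset.mem_univ, if_true]

lemma Emat_sq (h : n ≤ m) (B : Matrix (Fin m) (Fin n) ℤ) (k : Fin n) (ε : ℤ) :
    Emat h B k ε * Emat h B k ε = 1 := by
  ext i j
  rw [Emat_mul]
  simp only [Emat, Matrix.of_apply, Matrix.one_apply]
  split_ifs <;> simp_all <;> ring

lemma Fmat_sq (h : n ≤ m) (B : Matrix (Fin m) (Fin n) ℤ) (k : Fin n) (ε : ℤ) :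
    Fmat h B k ε * Fmat h B k ε = 1 := by
  ext i j
  rw [mul_Fmat]
  simp only [Fmat, Matrix.of_apply, Matrix.one_apply]
  split_ifs <;> simp_all <;> ring

lemma key_id (x y : ℤ) : x * pp y + pp (-x) * y = pp x * pp y - pp (-x) * pp (-y) := by
  have hx : x = pp x - pp (-x) := by simp [pp]
  have hy : y = pp y - pp (-y) := by simp [pp]
  nth_rewrite 1 [hx]
  nth_rewrite 2 [hy]
  ring

lemma mutB_eq (h : n ≤ m) (B : Matrix (Fin m) (Fin n) ℤ) (k : Fin n)
    (h0 : B (Fin.castLE h k) k = 0) :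
    mutB h B k = Emat h B k 1 * B * Fmat h B k 1 := by
  ext i j
  rw [mul_Fmat, Emat_mul, Emat_mul]
  simp only [mutB, Matrix.of_apply, one_mul, h0]
  by_cases hi : i = Fin.castLE h k
  · subst hi
    by_cases hj : j = k <;> simp [hj, h0] <;> ring
  · by_cases hj : j = k
    · subst hj
      simp [hi, h0]; ring
    · simp only [hi, hj, or_self, if_false, if_neg hi, if_neg hj]
      have := key_id (B i k) (B (Fin.castLE h k) j)
      linarith

/-- Mutation preserves rank: rank (μ_k(B̃)) = rank B̃. -/
theorem stmt4 {m n : ℕ} (h : n ≤ m) (B : Matrix (Fin m) (Fin n) ℤ)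
    (hB : IsMutationMatrix h B) (k : Fin n) :
    (mutB h B k).rank = B.rank := by
  obtain ⟨S, hS, hskew⟩ := hB
  have h0 : B (Fin.castLE h k) k = 0 := by
    have := congrFun (congrFun hskew k) k
    simp [Matrix.mul_apply, prin, Matrix.diagonal, Matrix.transpose_apply] at this
    -- this : S k * B (castLE h k) k = -(S k * B (castLE h k) k) or similar
    have h2 : S k * B (Fin.castLE h k) k = 0 := by linarith
    exact (mul_eq_zero.mp h2).resolve_left (hS k).ne'
  rw [mutB_eq h B k h0]
  have hE : IsUnit (Emat h B k 1).det := by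
    apply IsUnit.of_mul_eq_one (Emat h B k 1).det
    rw [← Matrix.det_mul, Emat_sq, Matrix.det_one]
  have hF : IsUnit (Fmat h B k 1).det := by
    apply IsUnit.of_mul_eq_one (Fmat h B k 1).det
    rw [← Matrix.det_mul, Fmat_sq, Matrix.det_one]
  rw [Matrix.rank_mul_eq_left_of_isUnit_det _ _ hF,
      Matrix.rank_mul_eq_right_of_isUnit_det _ _ hE]

end ClusterF
end

section
/- Let (B̃, Λ) be a compatible pair of type S = diag(s₁,…,sₙ), and let B be the top n×n submatrix of B̃. Then: (1) B̃ has full rank n; (2) B̃ᵀ Λ B̃ = S·B; in particular S·B is skew-symmetric, so B is skew-symmetrizable with skew-symmetrizer S. -/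
open Matrix BigOperators

namespace ClusterF

variable {m n : ℕ}

/-- If (B̃, Λ) is a compatible pair of type S, then B̃ has full rank n,
B̃ᵀ Λ B̃ = S·B where B is the principal part of B̃, and S·B is skew-symmetric
(so B is skew-symmetrizable with skew-symmetrizer S). -/
theorem stmt6 {m n : ℕ} (h : n ≤ m) (B : Matrix (Fin m) (Fin n) ℤ)
    (Λ : Matrix (Fin m) (Fin m) ℤ) (S : Fin n → ℤ)
    (hΛ : Λᵀ = -Λ) (hS : ∀ i, 0 < S i) (hcomp : Bᵀ * Λ = typeMat h S) :
    B.rank = n ∧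
      Bᵀ * Λ * B = Matrix.diagonal S * prin h B ∧
      (Matrix.diagonal S * prin h B)ᵀ = -(Matrix.diagonal S * prin h B) := by
  -- key: typeMat h S * B = diagonal S * prin h B
  have hkey : typeMat h S * B = Matrix.diagonal S * prin h B := by
    ext i j
    simp only [Matrix.mul_apply, typeMat, prin, Matrix.diagonal, Matrix.of_apply]
    rw [Finset.sum_eq_single (Fin.castLE h i)]
    · simp
    · intro b _ hb
      simp [hb]
    · simp
  have heq : Bᵀ * Λ * B = Matrix.diagonal S * prin h B := by
    rw [hcomp, hkey]
  -- skew-symmetry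
  have hskew : (Matrix.diagonal S * prin h B)ᵀ = -(Matrix.diagonal S * prin h B) := by
    rw [← heq]
    calc (Bᵀ * Λ * B)ᵀ = Bᵀ * Λᵀ * B := by
          rw [Matrix.transpose_mul, Matrix.transpose_mul, Matrix.transpose_transpose,
            Matrix.mul_assoc]
      _ = -(Bᵀ * Λ * B) := by rw [hΛ, Matrix.mul_neg, Matrix.neg_mul]
  -- injectivity of mulVec
  have hinj : Function.Injective B.mulVecLin := by
    rw [← LinearMap.ker_eq_bot, LinearMap.ker_eq_bot']
    intro v hv
    have hBv : B.mulVec v = 0 := hv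
    have h2 : Λ * B = -(typeMat h S)ᵀ := by
      have := congrArg Matrix.transpose hcomp
      rw [Matrix.transpose_mul, Matrix.transpose_transpose, hΛ] at this
      rw [← this]; simp [Matrix.neg_mul]
    funext i
    have h3 : (typeMat h S)ᵀ.mulVec v (Fin.castLE h i) = 0 := by
      have : Λ.mulVec (B.mulVec v) = (-(typeMat h S)ᵀ).mulVec v := by
        rw [Matrix.mulVec_mulVec, h2]
      rw [hBv, Matrix.mulVec_zero] at this
      have := congrFun this (Fin.castLE h i)
      simpa [Matrix.neg_mulVec] using this.symm
    have h4 : S i * v i = 0 := by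
      rw [Matrix.mulVec, dotProduct] at h3
      rw [← h3]
      rw [Finset.sum_eq_single i]
      · simp [typeMat, Matrix.transpose_apply]
      · intro b _ hb
        simp only [Matrix.transpose_apply, typeMat, Matrix.of_apply]
        have : ¬ (Fin.castLE h i = Fin.castLE h b) := by
          intro hc
          exact hb (Fin.castLE_injective h hc).symm
        simp [this]
      · simp
    simpa using (mul_eq_zero.mp h4).resolve_left (hS i).ne'
  have hrank : B.rank = n := by
    rw [Matrix.rank]
    rw [(LinearEquiv.ofInjective B.mulVecLin hinj).finrank_eq.symm]
    simp
  exact ⟨hrank, heq, hskew⟩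

end ClusterF
end

section
/- Let (B̃, Λ) be a compatible pair of type S and k ∈ {1,…,n}. Then (E_{k,+}^{B̃})ᵀ Λ E_{k,+}^{B̃} = (E_{k,-}^{B̃})ᵀ Λ E_{k,-}^{B̃}; that is, the matrix Λ' := (E_{k,ε}^{B̃})ᵀ Λ E_{k,ε}^{B̃} is independent of the choice of sign ε ∈ {+,-}. -/
open Matrix BigOperators

namespace ClusterF

variable {m n : ℕ}

/-- For a compatible pair (B̃, Λ) of type S and k ∈ {1,…,n}, the matrix
Λ' = (E_{k,ε}^{B̃})ᵀ Λ E_{k,ε}^{B̃} is independent of the choice of sign ε. -/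
theorem stmt7 {m n : ℕ} (h : n ≤ m) (B : Matrix (Fin m) (Fin n) ℤ)
    (Λ : Matrix (Fin m) (Fin m) ℤ) (S : Fin n → ℤ)
    (hΛ : Λᵀ = -Λ) (hS : ∀ i, 0 < S i) (hcomp : Bᵀ * Λ = typeMat h S)
    (k : Fin n) :
    (Emat h B k 1)ᵀ * Λ * Emat h B k 1 = (Emat h B k (-1))ᵀ * Λ * Emat h B k (-1) := by
  set κ : Fin m := Fin.castLE h k with hκ
  -- row fact from compatibility
  have hrow : ∀ q, (∑ p, B p k * Λ p q) = if q = κ then S k else 0 := by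
    intro q
    have := congrFun (congrFun hcomp k) q
    simpa [Matrix.mul_apply, Matrix.transpose_apply, typeMat] using this
  have hskew : ∀ p q, Λ q p = -Λ p q := by
    intro p q
    have := congrFun (congrFun hΛ p) q
    simpa using this
  have hcol : ∀ p, (∑ q, Λ p q * B q k) = if p = κ then -S k else 0 := by
    intro p
    have h1 : (∑ q, Λ p q * B q k) = -∑ q, B q k * Λ q p := by
      rw [← Finset.sum_neg_distrib]
      apply Finset.sum_congr rfl
      intro q _
      rw [hskew p q]; ring
    rw [h1, hrow p]
    split_ifs <;> simp
  have hBkk : B κ k = 0 := by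
    have h1 : ∑ q, (∑ p, B p k * Λ p q) * B q k = S k * B κ k := by
      simp [hrow, ite_mul, zero_mul]
    have h2 : ∑ p, B p k * (∑ q, Λ p q * B q k) = -(S k * B κ k) := by
      simp only [hcol, mul_ite, mul_zero]
      simp [mul_comm]
    have h3 : ∑ q, (∑ p, B p k * Λ p q) * B q k
        = ∑ p, B p k * (∑ q, Λ p q * B q k) := by
      simp only [Finset.sum_mul, Finset.mul_sum]
      rw [Finset.sum_comm]
      apply Finset.sum_congr rfl; intro p _
      apply Finset.sum_congr rfl; intro q _
      ring
    have h4 : S k * B κ k = 0 := by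
      rw [h3, h2] at h1
      linarith
    rcases mul_eq_zero.mp h4 with h5 | h5
    · exact absurd h5 (ne_of_gt (hS k))
    · exact h5
  -- the correction matrix D
  set D : Matrix (Fin m) (Fin m) ℤ :=
    Matrix.of (fun i j => if j = κ then -B i k else 0) with hD
  have hppneg : ∀ a : ℤ, max (-a) 0 = max a 0 + -a := by
    intro a
    rcases le_total a 0 with ha | ha
    · rw [max_eq_left (neg_nonneg.2 ha), max_eq_right ha]; ring
    · rw [max_eq_right (neg_nonpos.2 ha), max_eq_left ha]; ring
  have hE : Emat h B k 1 = Emat h B k (-1) + D := by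
    ext i j
    by_cases hj : j = κ
    · by_cases hi : i = κ
      · simp [Emat, D, hi, hj, hBkk]
      · simp only [Emat, D, Matrix.of_apply, Matrix.add_apply, ← hκ, hi, hj, if_pos rfl,
          if_neg hi, pp]
        rw [show -(1 * B i k) = -(B i k) by ring, show -(-1 * B i k) = B i k by ring]
        exact hppneg (B i k)
    · simp [Emat, D, hj, ← hκ]
  have hDΛ : Dᵀ * Λ = Matrix.of (fun i j =>
      if i = κ then (if j = κ then -S k else 0) else 0) := by
    ext i j
    simp only [Matrix.mul_apply, Matrix.transpose_apply, Matrix.of_apply, hD]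
    by_cases hi : i = κ
    · simp only [hi, eq_self_iff_true, if_true]
      rw [show (∑ p, -B p k * Λ p j) = -∑ p, B p k * Λ p j by
        rw [← Finset.sum_neg_distrib]; apply Finset.sum_congr rfl; intro p _; ring]
      rw [hrow j]
      split_ifs <;> simp
    · simp [hi]
  have hΛD : Λ * D = Matrix.of (fun i j =>
      if i = κ then (if j = κ then S k else 0) else 0) := by
    ext i j
    simp only [Matrix.mul_apply, Matrix.of_apply, hD]
    by_cases hj : j = κ
    · simp only [hj, eq_self_iff_true, if_true]
      rw [show (∑ q, Λ i q * -B q k) = -∑ q, Λ i q * B q k by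
        rw [← Finset.sum_neg_distrib]; apply Finset.sum_congr rfl; intro q _; ring]
      rw [hcol i]
      split_ifs <;> simp
    · simp [hj]
  have hErow : ∀ (ε : ℤ) (j : Fin m), Emat h B k ε κ j = if j = κ then -1 else 0 := by
    intro ε j
    by_cases hj : j = κ
    · simp [Emat, hj, ← hκ]
    · simp [Emat, hj, (Ne.symm hj : ¬κ = j), ← hκ]
  set Em := Emat h B k (-1) with hEm
  have key : Dᵀ * Λ * Em + Dᵀ * Λ * D + Emᵀ * Λ * D = 0 := by
    rw [hDΛ, Matrix.mul_assoc Emᵀ, hΛD]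
    ext i j
    simp only [Matrix.mul_apply, Matrix.of_apply, Matrix.add_apply,
      Matrix.transpose_apply, Matrix.zero_apply, ite_mul, zero_mul, mul_ite, mul_zero]
    by_cases hi : i = κ <;> by_cases hj : j = κ <;>
      simp [hi, hj, Finset.sum_ite_eq', hErow, hD, hBkk, hEm]
  have expand : (Em + D)ᵀ * Λ * (Em + D)
      = Emᵀ * Λ * Em + (Dᵀ * Λ * Em + Dᵀ * Λ * D + Emᵀ * Λ * D) := by
    simp only [Matrix.transpose_add, Matrix.add_mul, Matrix.mul_add]
    abel
  rw [hE, expand, key, add_zero]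

end ClusterF
end

section
/- Let (B̃, Λ) be a compatible pair of type S, let k ∈ {1,…,n}, let ε ∈ {+,-}, and set B̃' := μ_k(B̃) = E_{k,ε}^{B̃} B̃ F_{k,ε}^{B̃} and Λ' := (E_{k,ε}^{B̃})ᵀ Λ E_{k,ε}^{B̃}. Then Λ' is skew-symmetric and (B̃', Λ') is again a compatible pair of the same type S, i.e. (B̃')ᵀ Λ' = (S | 0). -/
open Matrix BigOperators

namespace ClusterF

variable {m n : ℕ}

lemma pp_nonneg' {a : ℤ} (h : 0 ≤ a) : pp a = a := max_eq_left h
lemma pp_nonpos' {a : ℤ} (h : a ≤ 0) : pp a = 0 := max_eq_right h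

lemma pp_sub (x : ℤ) : pp x - pp (-x) = x := by
  unfold pp
  rcases le_total x 0 with h | h
  · rw [max_eq_right h, max_eq_left (by omega : (0:ℤ) ≤ -x)]; ring
  · rw [max_eq_left h, max_eq_right (by omega : -x ≤ 0)]; ring

lemma pp_mul_left (s a : ℤ) (hs : 0 ≤ s) : s * pp a = pp (s * a) := by
  unfold pp; rw [mul_max_of_nonneg _ _ hs, mul_zero]

lemma pp_key (ε x y : ℤ) (hε : ε = 1 ∨ ε = -1) :
    x * pp (ε * y) + pp (-(ε * x)) * y = pp x * pp y - pp (-x) * pp (-y) := by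
  rcases hε with rfl | rfl <;>
    simp only [one_mul, neg_one_mul, neg_neg]
  · rcases le_total 0 y with hy | hy
    · rw [pp_nonneg' hy, pp_nonpos' (by omega : -y ≤ 0)]
      linear_combination (pp_sub x) * (-y)
    · rw [pp_nonpos' hy, pp_nonneg' (by omega : (0:ℤ) ≤ -y)]
      ring
  · rcases le_total 0 y with hy | hy
    · rw [pp_nonpos' (by omega : -y ≤ 0), pp_nonneg' hy]
      ring
    · rw [pp_nonneg' (by omega : (0:ℤ) ≤ -y), pp_nonpos' hy]
      linear_combination (pp_sub x) * y

lemma fsum_one {N : ℕ} (f : Fin N → ℤ) (a : Fin N) (h : ∀ q, q ≠ a → f q = 0) :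
    ∑ q, f q = f a :=
  Finset.sum_eq_single_of_mem a (Finset.mem_univ a) (fun b _ hb => h b hb)

lemma fsum_two {N : ℕ} (f : Fin N → ℤ) (a b : Fin N) (hab : a ≠ b)
    (h : ∀ q, q ≠ a → q ≠ b → f q = 0) : ∑ q, f q = f a + f b :=
  Finset.sum_eq_add_of_mem a b (Finset.mem_univ a) (Finset.mem_univ b) hab
    (fun c _ hc => h c hc.1 hc.2)

/-- Mutation of a compatible pair of type S is again a compatible pair of
type S: with B̃' = μ_k(B̃) and Λ' = (E_{k,ε}^{B̃})ᵀ Λ E_{k,ε}^{B̃}, the matrix Λ' is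
skew-symmetric and (B̃')ᵀ Λ' = (S | 0). -/
theorem stmt8 {m n : ℕ} (h : n ≤ m) (B : Matrix (Fin m) (Fin n) ℤ)
    (Λ : Matrix (Fin m) (Fin m) ℤ) (S : Fin n → ℤ)
    (hΛ : Λᵀ = -Λ) (hS : ∀ i, 0 < S i) (hcomp : Bᵀ * Λ = typeMat h S)
    (k : Fin n) (ε : ℤ) (hε : ε = 1 ∨ ε = -1)
    (B' : Matrix (Fin m) (Fin n) ℤ) (hB' : B' = mutB h B k)
    (Λ' : Matrix (Fin m) (Fin m) ℤ)
    (hΛ' : Λ' = (Emat h B k ε)ᵀ * Λ * Emat h B k ε) :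
    Λ'ᵀ = -Λ' ∧ B'ᵀ * Λ' = typeMat h S := by
  have hskewΛ' : Λ'ᵀ = -Λ' := by
    rw [hΛ', transpose_mul, transpose_mul, transpose_transpose, hΛ]
    simp only [Matrix.neg_mul, Matrix.mul_neg, Matrix.mul_assoc]
  refine ⟨hskewΛ', ?_⟩
  -- skew-symmetrizability of the principal part
  have hX : ∀ i j : Fin n, (Bᵀ * Λ * B) i j = S i * B (Fin.castLE h i) j := by
    intro i j
    rw [hcomp, Matrix.mul_apply,
      fsum_one _ (Fin.castLE h i) (fun q hq => by simp [typeMat, hq])]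
    simp [typeMat]
  have hskew : ∀ i j : Fin n,
      S i * B (Fin.castLE h i) j = -(S j * B (Fin.castLE h j) i) := by
    intro i j
    have h3 : (Bᵀ * Λ * B)ᵀ = -(Bᵀ * Λ * B) := by
      rw [transpose_mul, transpose_mul, transpose_transpose, hΛ]
      simp only [Matrix.neg_mul, Matrix.mul_neg, Matrix.mul_assoc]
    have h4 := congrFun (congrFun h3 j) i
    rw [Matrix.transpose_apply, Matrix.neg_apply, hX i j, hX j i] at h4
    linarith
  have bkk : B (Fin.castLE h k) k = 0 := by
    have h0 : S k * B (Fin.castLE h k) k = 0 := by linarith [hskew k k]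
    exact (mul_eq_zero.mp h0).resolve_left (hS k).ne'
  -- E * E = 1
  have hEE : Emat h B k ε * Emat h B k ε = 1 := by
    ext i j
    rw [Matrix.mul_apply]
    by_cases hi : i = Fin.castLE h k
    · subst hi
      rw [fsum_one _ (Fin.castLE h k) (fun q hq => by simp [Emat, hq, Ne.symm hq])]
      by_cases hj : j = Fin.castLE h k
      · simp [Emat, hj, Matrix.one_apply]
      · simp [Emat, hj, Matrix.one_apply, Ne.symm hj]
    · rw [fsum_two _ (Fin.castLE h k) i (Ne.symm hi)
        (fun q h1 h2 => by simp [Emat, h1, Ne.symm h2])]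
      by_cases hj : j = Fin.castLE h k
      · subst hj
        simp [Emat, hi, Matrix.one_apply, Ne.symm hi]
      · simp [Emat, hi, hj, Matrix.one_apply, Ne.symm hj]
  have hEtEt : (Emat h B k ε)ᵀ * (Emat h B k ε)ᵀ = 1 := by
    rw [← transpose_mul, hEE, transpose_one]
  -- B * F computed
  have hBF : ∀ (i : Fin m) (j : Fin n), (B * Fmat h B k ε) i j =
      if j = k then -(B i k)
      else B i k * pp (ε * B (Fin.castLE h k) j) + B i j := by
    intro i j
    rw [Matrix.mul_apply]
    by_cases hj : j = k
    · rw [fsum_one _ k (fun q hq => by simp [Fmat, hq, hj])]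
      simp [Fmat, hj]
    · rw [fsum_two _ k j (Ne.symm hj) (fun q h1 h2 => by simp [Fmat, h1, h2])]
      simp [Fmat, hj, Ne.symm hj]
  -- E * B * F = mutB
  have hEBF : Emat h B k ε * B * Fmat h B k ε = mutB h B k := by
    ext i j
    rw [Matrix.mul_assoc, Matrix.mul_apply]
    by_cases hi : i = Fin.castLE h k
    · subst hi
      rw [fsum_one _ (Fin.castLE h k) (fun q hq => by simp [Emat, hq, Ne.symm hq])]
      rw [hBF]
      by_cases hj : j = k
      · simp [Emat, mutB, hj, bkk]
      · simp [Emat, mutB, hj, bkk]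
    · rw [fsum_two _ (Fin.castLE h k) i (Ne.symm hi)
        (fun q h1 h2 => by simp [Emat, h1, Ne.symm h2])]
      rw [hBF, hBF]
      by_cases hj : j = k
      · simp [Emat, mutB, hj, hi, bkk]
      · simp only [Emat, mutB, Matrix.of_apply, if_neg hi, if_neg hj, ite_false,
          if_pos rfl, ite_true, bkk, hi, hj, or_self, or_false, false_or]
        linear_combination pp_key ε (B i k) (B (Fin.castLE h k) j) hε
  -- typeMat * E computed
  have hSE : ∀ (p : Fin n) (j : Fin m), (typeMat h S * Emat h B k ε) p j =
      S p * Emat h B k ε (Fin.castLE h p) j := by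
    intro p j
    rw [Matrix.mul_apply,
      fsum_one _ (Fin.castLE h p) (fun q hq => by simp [typeMat, hq])]
    simp [typeMat]
  -- Fᵀ * (typeMat * E) = typeMat
  have hFSE : (Fmat h B k ε)ᵀ * (typeMat h S * Emat h B k ε) = typeMat h S := by
    ext i j
    rw [Matrix.mul_apply]
    by_cases hi : i = k
    · rw [fsum_one _ k (fun q hq => by
        simp [Fmat, Matrix.transpose_apply, hq, hi])]
      rw [Matrix.transpose_apply, hSE]
      by_cases hj : j = Fin.castLE h k
      · simp [Fmat, Emat, typeMat, hi, hj]
      · simp [Fmat, Emat, typeMat, hi, hj, Ne.symm hj]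
    · have hci : Fin.castLE h i ≠ Fin.castLE h k :=
        fun hc => hi (Fin.castLE_injective h hc)
      rw [fsum_two _ k i (Ne.symm hi) (fun q h1 h2 => by
        simp [Fmat, Matrix.transpose_apply, h1, h2])]
      rw [Matrix.transpose_apply, Matrix.transpose_apply, hSE, hSE]
      by_cases hj : j = Fin.castLE h k
      · have e1 : S i * pp (-(ε * B (Fin.castLE h i) k))
            = S k * pp (ε * B (Fin.castLE h k) i) := by
          rw [pp_mul_left _ _ (hS i).le, pp_mul_left _ _ (hS k).le]
          congr 1
          linear_combination (-ε) * hskew i k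
        have hjci : ¬ j = Fin.castLE h i := fun hc => hci (by rw [← hc, hj])
        simp only [Fmat, Emat, typeMat, Matrix.of_apply, if_pos rfl,
          if_neg hi, if_pos hj, if_neg hjci, if_neg hci, ite_true, ite_false]
        linarith [e1]
      · by_cases hji : j = Fin.castLE h i
        · simp [Fmat, Emat, typeMat, hi, hj, Ne.symm hj, hji, Ne.symm hi,
            (show Fin.castLE h k ≠ j from fun hc => hci (hc.trans hji).symm)]
        · simp [Fmat, Emat, typeMat, hi, hj, Ne.symm hj, hji,
            (show Fin.castLE h i ≠ j from fun hc => hji hc.symm)]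
  -- assemble
  rw [hB', ← hEBF, hΛ', transpose_mul, transpose_mul]
  simp only [Matrix.mul_assoc]
  rw [← Matrix.mul_assoc (Emat h B k ε)ᵀ (Emat h B k ε)ᵀ, hEtEt, Matrix.one_mul,
    ← Matrix.mul_assoc Bᵀ Λ, hcomp]
  exact hFSE
end ClusterF
end

section
/- Let B be an n×n skew-symmetrizable integer matrix and set B̃ = [B; I_n], the 2n×n matrix whose top block is B and bottom block is the identity I_n. A 2n×2n skew-symmetric integer matrix Λ is compatible with B̃ (i.e. B̃ᵀΛ = (S | 0) for some diagonal integer matrix S with positive diagonal entries, 0 the n×n zero matrix) if and only if Λ has the block form Λ = [[Λ₀, -S - Λ₀B], [S - BᵀΛ₀, -SB + BᵀΛ₀B]], where Λ₀ is some skew-symmetric integer n×n matrix and S is some skew-symmetrizer of B. -/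
open Matrix BigOperators

namespace ClusterF

variable {m n : ℕ}

/-- For B an n×n skew-symmetrizable integer matrix and B̃ = [B; Iₙ],
a 2n×2n skew-symmetric integer matrix Λ is compatible with B̃ (i.e. B̃ᵀΛ = (S | 0) for
some positive diagonal integer S) iff Λ has the block form
[[Λ₀, -S - Λ₀B], [S - BᵀΛ₀, -SB + BᵀΛ₀B]] for some skew-symmetric integer Λ₀ and some
skew-symmetrizer S of B. -/
theorem stmt10 {n : ℕ} (hn : 0 < n) (B : Matrix (Fin n) (Fin n) ℤ)
    (hB : ∃ S : Fin n → ℤ, (∀ i, 0 < S i) ∧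
      (Matrix.diagonal S * B)ᵀ = -(Matrix.diagonal S * B))
    (Λ : Matrix (Fin n ⊕ Fin n) (Fin n ⊕ Fin n) ℤ) (hΛ : Λᵀ = -Λ) :
    (∃ S : Fin n → ℤ, (∀ i, 0 < S i) ∧
        (Matrix.fromRows B (1 : Matrix (Fin n) (Fin n) ℤ))ᵀ * Λ
          = Matrix.fromCols (Matrix.diagonal S) 0) ↔
      ∃ (Λ₀ : Matrix (Fin n) (Fin n) ℤ) (S : Fin n → ℤ),
        Λ₀ᵀ = -Λ₀ ∧ (∀ i, 0 < S i) ∧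
        (Matrix.diagonal S * B)ᵀ = -(Matrix.diagonal S * B) ∧
        Λ = Matrix.fromBlocks Λ₀ (-(Matrix.diagonal S) - Λ₀ * B)
              (Matrix.diagonal S - Bᵀ * Λ₀)
              (-(Matrix.diagonal S * B) + Bᵀ * Λ₀ * B) := by
  obtain ⟨P, Q, R, T, hΛb⟩ : ∃ P Q R T, Λ = Matrix.fromBlocks P Q R T :=
    ⟨_, _, _, _, (Matrix.fromBlocks_toBlocks Λ).symm⟩
  subst hΛb
  rw [Matrix.fromBlocks_transpose, Matrix.fromBlocks_neg,
    Matrix.fromBlocks_inj] at hΛ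
  obtain ⟨hP, hRQ, hQR, hT⟩ := hΛ
  have hmul : ∀ X Y : Matrix (Fin n) (Fin n) ℤ,
      (Matrix.fromRows B (1 : Matrix (Fin n) (Fin n) ℤ))ᵀ * Matrix.fromBlocks P X R Y
        = Matrix.fromCols (Bᵀ * P + R) (Bᵀ * X + Y) := by
    intro X Y
    rw [Matrix.transpose_fromRows, Matrix.fromCols_mul_fromBlocks,
      Matrix.transpose_one, Matrix.one_mul, Matrix.one_mul]
  constructor
  · rintro ⟨S, hS, hEq⟩
    rw [hmul, Matrix.fromCols_ext_iff] at hEq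
    obtain ⟨h1, h2⟩ := hEq
    have hR : R = Matrix.diagonal S - Bᵀ * P := by
      rw [← h1]; abel
    have hQ : Q = -(Matrix.diagonal S) - P * B := by
      have : Q = -Rᵀ := by rw [hRQ]; simp
      rw [this, hR, Matrix.transpose_sub, Matrix.transpose_mul, hP,
        Matrix.transpose_transpose, Matrix.diagonal_transpose]
      noncomm_ring
    have hTval : T = Bᵀ * Matrix.diagonal S + Bᵀ * P * B := by
      have : T = -(Bᵀ * Q) := by
        have := h2
        rw [add_eq_zero_iff_eq_neg] at this
        rw [this]; simp
      rw [this, hQ]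
      noncomm_ring
    have hskew : (Matrix.diagonal S * B)ᵀ = -(Matrix.diagonal S * B) := by
      have h3 := hT
      rw [hTval] at h3
      have h4 : Matrix.diagonal S * B - Bᵀ * P * B
          = -(Bᵀ * Matrix.diagonal S) - Bᵀ * P * B := by
        calc Matrix.diagonal S * B - Bᵀ * P * B
            = (Bᵀ * Matrix.diagonal S + Bᵀ * P * B)ᵀ := by
              rw [Matrix.transpose_add, Matrix.transpose_mul, Matrix.transpose_mul,
                Matrix.transpose_mul, hP, Matrix.transpose_transpose,
                Matrix.diagonal_transpose]
              noncomm_ring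
          _ = -(Bᵀ * Matrix.diagonal S + Bᵀ * P * B) := h3
          _ = -(Bᵀ * Matrix.diagonal S) - Bᵀ * P * B := by noncomm_ring
      have h5 : Matrix.diagonal S * B = -(Bᵀ * Matrix.diagonal S) := by
        have := sub_left_injective h4
        exact this
      rw [Matrix.transpose_mul, Matrix.diagonal_transpose, h5, neg_neg]
    refine ⟨P, S, hP, hS, hskew, ?_⟩
    rw [hQ, hR, hTval, Matrix.fromBlocks_inj]
    refine ⟨rfl, rfl, rfl, ?_⟩
    have h5 : Bᵀ * Matrix.diagonal S = -(Matrix.diagonal S * B) := by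
      calc Bᵀ * Matrix.diagonal S = Bᵀ * (Matrix.diagonal S)ᵀ := by
            rw [Matrix.diagonal_transpose]
        _ = (Matrix.diagonal S * B)ᵀ := (Matrix.transpose_mul _ _).symm
        _ = -(Matrix.diagonal S * B) := hskew
    rw [h5]
  · rintro ⟨Λ₀, S, h0, hS, hsk, hblocks⟩
    rw [Matrix.fromBlocks_inj] at hblocks
    obtain ⟨e1, e2, e3, e4⟩ := hblocks
    subst e1; subst e2; subst e3; subst e4
    refine ⟨S, hS, ?_⟩
    rw [hmul]
    have h5 : Bᵀ * Matrix.diagonal S = -(Matrix.diagonal S * B) := by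
      calc Bᵀ * Matrix.diagonal S = Bᵀ * (Matrix.diagonal S)ᵀ := by
            rw [Matrix.diagonal_transpose]
        _ = (Matrix.diagonal S * B)ᵀ := (Matrix.transpose_mul _ _).symm
        _ = -(Matrix.diagonal S * B) := hsk
    have c1 : Bᵀ * P + (Matrix.diagonal S - Bᵀ * P) = Matrix.diagonal S := by abel
    have c2 : Bᵀ * (-(Matrix.diagonal S) - P * B)
        + (-(Matrix.diagonal S * B) + Bᵀ * P * B) = 0 := by
      have h6 : Bᵀ * (-(Matrix.diagonal S) - P * B)
          = Matrix.diagonal S * B - Bᵀ * P * B := by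
        rw [Matrix.mul_sub, Matrix.mul_neg, h5, ← Matrix.mul_assoc]
        noncomm_ring
      rw [h6]; noncomm_ring
    rw [c1, c2]


end ClusterF
end

section
/- If B̃ is an m×n mutation matrix of full rank n, then there exists an m×m skew-symmetric integer matrix Λ and a diagonal integer matrix S with positive diagonal entries such that (B̃, Λ) is a compatible pair of type S, i.e. B̃ᵀΛ = (S | 0). -/
open Matrix BigOperators

namespace ClusterF

variable {m n : ℕ}

section Aux

/-- Common denominator for a finite family of rationals. -/
lemma exists_int_mul {ι : Type*} [Fintype ι] (v : ι → ℚ) :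
    ∃ (d : ℤ) (w : ι → ℤ), d ≠ 0 ∧ ∀ i, (w i : ℚ) = d * v i := by
  obtain ⟨b, hb⟩ := IsLocalization.exist_integer_multiples (nonZeroDivisors ℤ)
    (Finset.univ) v
  choose w hw using fun i => hb i (Finset.mem_univ i)
  refine ⟨(b : ℤ), w, nonZeroDivisors.coe_ne_zero b, fun i => ?_⟩
  simpa [Submonoid.smul_def, zsmul_eq_mul] using hw i

lemma ker_eq_bot_of_rank {m n : ℕ} (B : Matrix (Fin m) (Fin n) ℤ)
    (hrank : B.rank = n) : LinearMap.ker B.mulVecLin = ⊥ := by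
  have h1 := LinearMap.rank_range_add_rank_ker B.mulVecLin
  rw [rank_fin_fun] at h1
  have hle : Module.rank ℤ (LinearMap.range B.mulVecLin) ≤ (n : Cardinal) := by
    rw [← h1]; exact le_self_add
  have hlt : Module.rank ℤ (LinearMap.range B.mulVecLin) < Cardinal.aleph0 :=
    lt_of_le_of_lt hle (Cardinal.nat_lt_aleph0 n)
  have hr : Module.rank ℤ (LinearMap.range B.mulVecLin) = (n : Cardinal) := by
    have := Cardinal.cast_toNat_of_lt_aleph0 hlt
    rw [← this]
    norm_cast
  rw [hr] at h1
  have hk0 : Module.rank ℤ (LinearMap.ker B.mulVecLin) = 0 := by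
    have hklt : Module.rank ℤ (LinearMap.ker B.mulVecLin) < Cardinal.aleph0 := by
      by_contra hc
      push_neg at hc
      have : (Cardinal.aleph0 : Cardinal) ≤ (n : Cardinal) := by
        calc Cardinal.aleph0 ≤ Module.rank ℤ (LinearMap.ker B.mulVecLin) := hc
        _ ≤ (n : Cardinal) := by rw [← h1]; exact le_add_self
      exact absurd this (not_le.mpr (Cardinal.nat_lt_aleph0 n))
    obtain ⟨k, hk⟩ := Cardinal.lt_aleph0.mp hklt
    rw [hk] at h1 ⊢
    norm_cast at h1 ⊢
    omega
  exact Submodule.rank_eq_zero.mp hk0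

lemma exists_right_inv {m n : ℕ} (B : Matrix (Fin m) (Fin n) ℤ)
    (hker : LinearMap.ker B.mulVecLin = ⊥) :
    ∃ A : Matrix (Fin m) (Fin n) ℚ,
      (B.map (Int.cast : ℤ → ℚ))ᵀ * A = 1 := by
  set Bq : Matrix (Fin m) (Fin n) ℚ := B.map (Int.cast : ℤ → ℚ) with hBq
  have hinjq : Function.Injective Bq.mulVecLin := by
    rw [← LinearMap.ker_eq_bot, eq_bot_iff]
    intro x hx
    simp only [LinearMap.mem_ker, mulVecLin_apply] at hx
    obtain ⟨d, w, hd, hw⟩ := exists_int_mul x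
    have hBw : B.mulVec w = 0 := by
      ext i
      have : ((B.mulVec w i : ℤ) : ℚ) = 0 := by
        push_cast [mulVec, dotProduct]
        have : ∀ j, ((B i j : ℚ)) * (w j : ℚ) = d * (Bq i j * x j) := by
          intro j; rw [hw j, hBq]; simp [Matrix.map_apply]; ring
        rw [Finset.sum_congr rfl fun j _ => this j, ← Finset.mul_sum]
        have := congrFun hx i
        simp only [mulVec, dotProduct, Pi.zero_apply] at this
        rw [this, mul_zero]
      exact_mod_cast this
    have hw0 : w = 0 := by
      have : w ∈ LinearMap.ker B.mulVecLin := by simp [LinearMap.mem_ker, hBw]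
      rw [hker] at this; simpa using this
    have : ∀ i, x i = 0 := by
      intro i
      have h1 := hw i
      rw [hw0] at h1
      simp at h1
      rcases h1 with h | h
      · exact absurd (by exact_mod_cast h : (d:ℚ) = 0) (by exact_mod_cast hd)
      · exact h
    simp [Submodule.mem_bot]; ext i; exact this i
  have hkerG : LinearMap.ker (Bqᵀ * Bq).mulVecLin = ⊥ := by
    rw [Matrix.ker_mulVecLin_transpose_mul_self, LinearMap.ker_eq_bot]
    exact hinjq
  have hdet : IsUnit (Bqᵀ * Bq).det := by
    rw [isUnit_iff_ne_zero]
    intro h0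
    obtain ⟨v, hv, hv0⟩ := (Matrix.exists_mulVec_eq_zero_iff).mpr h0
    have hmem : v ∈ LinearMap.ker (Bqᵀ * Bq).mulVecLin := by
      rw [LinearMap.mem_ker, mulVecLin_apply, hv0]
    rw [hkerG] at hmem
    exact hv (by simpa using hmem)
  refine ⟨Bq * (Bqᵀ * Bq)⁻¹, ?_⟩
  rw [← Matrix.mul_assoc, Matrix.mul_nonsing_inv _ hdet]

end Aux

/-- Any mutation matrix of full rank n admits a compatible skew-symmetric
integer matrix Λ, i.e. there exist Λ skew-symmetric and S positive diagonal with
B̃ᵀΛ = (S | 0). -/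
theorem stmt11 {m n : ℕ} (h : n ≤ m) (B : Matrix (Fin m) (Fin n) ℤ)
    (hB : IsMutationMatrix h B) (hrank : B.rank = n) :
    ∃ (Λ : Matrix (Fin m) (Fin m) ℤ) (S : Fin n → ℤ),
      Λᵀ = -Λ ∧ (∀ i, 0 < S i) ∧ Bᵀ * Λ = typeMat h S := by
  obtain ⟨S₀, hS₀pos, hskew⟩ := hB
  obtain ⟨A, hA⟩ := exists_right_inv B (ker_eq_bot_of_rank B hrank)
  obtain ⟨d, w, hd, hw⟩ := exists_int_mul (fun p : Fin m × Fin n => A p.1 p.2)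
  set A' : Matrix (Fin m) (Fin n) ℤ := Matrix.of fun i j => w (i, j) with hA'def
  -- integer right-inverse relation : Bᵀ * A' = d • 1
  have hBA : Bᵀ * A' = (d : ℤ) • (1 : Matrix (Fin n) (Fin n) ℤ) := by
    ext i j
    have hq : (((Bᵀ * A') i j : ℤ) : ℚ) = ((((d : ℤ) • (1 : Matrix (Fin n) (Fin n) ℤ)) i j : ℤ) : ℚ) := by
      push_cast [Matrix.mul_apply, Matrix.smul_apply, Matrix.one_apply]
      have : ∀ k : Fin m, ((Bᵀ i k : ℤ) : ℚ) * ((A' k j : ℤ) : ℚ)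
          = (d : ℚ) * ((B.map (Int.cast : ℤ → ℚ))ᵀ i k * A k j) := by
        intro k
        have := hw (k, j)
        simp only [hA'def, Matrix.of_apply, Matrix.transpose_apply, Matrix.map_apply] at this ⊢
        rw [this]; ring
      rw [Finset.sum_congr rfl fun k _ => this k, ← Finset.mul_sum]
      have h2 : ∑ k, (B.map (Int.cast : ℤ → ℚ))ᵀ i k * A k j
          = (1 : Matrix (Fin n) (Fin n) ℚ) i j := by
        rw [← Matrix.mul_apply, hA]
      rw [h2]
      by_cases hij : i = j <;> simp [Matrix.one_apply, hij]
    exact_mod_cast hq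
  -- notation
  set D : Matrix (Fin n) (Fin n) ℤ := Matrix.diagonal S₀ with hD
  set P : Matrix (Fin n) (Fin m) ℤ :=
    Matrix.of (fun i j => if j = Fin.castLE h i then 1 else 0) with hP
  set K : Matrix (Fin n) (Fin n) ℤ := D * prin h B with hKdef
  have hK : Kᵀ = -K := hskew
  have hDT : Dᵀ = D := Matrix.diagonal_transpose S₀
  have hBP : Bᵀ * Pᵀ = (prin h B)ᵀ := by
    ext i j
    simp only [Matrix.mul_apply, Matrix.transpose_apply, hP, Matrix.of_apply, prin]
    rw [Finset.sum_eq_single (Fin.castLE h j)]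
    · simp
    · intro k _ hk; simp [Ne.symm, hk]
    · intro hmem; exact absurd (Finset.mem_univ _) hmem
  refine ⟨d • (A' * D * P) - d • (Pᵀ * D * A'ᵀ) - A' * K * A'ᵀ,
    fun i => d * d * S₀ i, ?_, ?_, ?_⟩
  · -- skew-symmetry
    have h3 : (A' * K * A'ᵀ)ᵀ = -(A' * K * A'ᵀ) := by
      rw [Matrix.transpose_mul, Matrix.transpose_mul, Matrix.transpose_transpose, hK]
      simp [Matrix.mul_assoc, Matrix.neg_mul, Matrix.mul_neg]
    have h4 : (A' * D * P)ᵀ = Pᵀ * D * A'ᵀ := by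
      rw [Matrix.transpose_mul, Matrix.transpose_mul, hDT, Matrix.mul_assoc]
    have h5 : (Pᵀ * D * A'ᵀ)ᵀ = A' * D * P := by
      rw [Matrix.transpose_mul, Matrix.transpose_mul, hDT, Matrix.transpose_transpose,
        Matrix.transpose_transpose, Matrix.mul_assoc]
    rw [Matrix.transpose_sub, Matrix.transpose_sub, Matrix.transpose_smul,
      Matrix.transpose_smul, h3, h4, h5]
    abel
  · intro i
    exact mul_pos (mul_self_pos.mpr hd) (hS₀pos i)
  · -- compatibility
    have hsm : ∀ (X : Matrix (Fin m) (Fin m) ℤ), Bᵀ * (d • X) = d • (Bᵀ * X) :=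
      fun X => Matrix.mul_smul _ _ _
    rw [Matrix.mul_sub, Matrix.mul_sub, hsm, hsm]
    rw [show Bᵀ * (A' * D * P) = (Bᵀ * A') * D * P by
      simp only [Matrix.mul_assoc]]
    rw [show Bᵀ * (Pᵀ * D * A'ᵀ) = (Bᵀ * Pᵀ) * D * A'ᵀ by
      simp only [Matrix.mul_assoc]]
    rw [show Bᵀ * (A' * K * A'ᵀ) = (Bᵀ * A') * K * A'ᵀ by
      simp only [Matrix.mul_assoc]]
    rw [hBA, hBP]
    have h6 : (prin h B)ᵀ * D = -K := by
      have : (prin h B)ᵀ * D = (Dᵀ * prin h B)ᵀ := by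
        rw [Matrix.transpose_mul, Matrix.transpose_transpose]
      rw [this, hDT, ← hKdef, hK]
    rw [h6]
    have h7 : (d:ℤ) • (1 : Matrix (Fin n) (Fin n) ℤ) * D * P = d • (D * P) := by
      rw [Matrix.smul_mul, Matrix.smul_mul, Matrix.one_mul]
    have h8 : (d:ℤ) • (1 : Matrix (Fin n) (Fin n) ℤ) * K * A'ᵀ = d • (K * A'ᵀ) := by
      rw [Matrix.smul_mul, Matrix.smul_mul, Matrix.one_mul]
    rw [h7, h8]
    have h10 : -K * A'ᵀ = -(K * A'ᵀ) := Matrix.neg_mul _ _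
    rw [h10, smul_neg, sub_neg_eq_add, add_sub_cancel_right]
    ext i j
    simp only [Matrix.smul_apply, Matrix.mul_apply, typeMat, Matrix.of_apply, hD, hP,
      Matrix.diagonal_apply, smul_eq_mul]
    rw [Finset.sum_eq_single i]
    · by_cases hij : j = Fin.castLE h i <;> simp [hij] <;> ring
    · intro k _ hk; simp [Matrix.diagonal_apply, Ne.symm hk]
    · intro hmem; exact absurd (Finset.mem_univ _) hmem

end ClusterF
end

section
/- Single-mutation form of Lemma 4.2: let B̃ = (b_{ij}) be an m×n mutation matrix, k ∈ {1,…,n} and a, a' ∈ ℤ^m. Then a' is the X-tropical mutation of a in direction k (i.e. a'_i = a_i for i ≠ k and a'_k = -a_k + max(Σ_{j=1}^m [b_{jk}]₊ a_j, Σ_{j=1}^m [-b_{jk}]₊ a_j)) if and only if a' = (E_{k,ε₀}^{B̃})ᵀ · a, where ε₀ = - if Σ_{j=1}^m b_{jk} a_j ≥ 0 and ε₀ = + otherwise. -/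
open Matrix BigOperators

namespace ClusterF

variable {m n : ℕ}

/-- a' is the X-tropical mutation of a in direction k iff
a' = (E_{k,ε₀}^{B̃})ᵀ a, where ε₀ = - if Σ_j b_{jk} a_j ≥ 0 and ε₀ = + otherwise. -/
theorem stmt13 {m n : ℕ} (h : n ≤ m) (B : Matrix (Fin m) (Fin n) ℤ)
    (hB : IsMutationMatrix h B) (k : Fin n) (a a' : Fin m → ℤ) :
    a' = xTrop h B k a ↔
      a' = (Emat h B k (if 0 ≤ ∑ j, B j k * a j then -1 else 1))ᵀ *ᵥ a := by
  obtain ⟨S, hSpos, hskew⟩ := hB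
  set kc := Fin.castLE h k with hkc
  have hbkk : B kc k = 0 := by
    have h1 : S k * B kc k = -(S k * B kc k) := by
      have h2 := congrFun (congrFun hskew k) k
      simpa [Matrix.mul_apply, Matrix.diagonal_apply, prin,
        Finset.sum_ite_eq, Finset.mem_univ] using h2
    have h3 : S k * B kc k = 0 := by linarith
    rcases mul_eq_zero.mp h3 with h4 | h4
    · exact absurd h4 (hSpos k).ne'
    · exact h4
  have hsum : ∀ ε : ℤ,
      ∑ j, (if j = kc then (-1 : ℤ) else pp (-(ε * B j k))) * a j
        = -(a kc) + ∑ j, pp (-(ε * B j k)) * a j := by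
    intro ε
    have h1 : ∀ j ∈ (Finset.univ : Finset (Fin m)),
        (if j = kc then (-1 : ℤ) else pp (-(ε * B j k))) * a j
          = (if j = kc then -(a kc) else 0) + pp (-(ε * B j k)) * a j := by
      intro j _
      by_cases hj : j = kc
      · subst hj; simp [pp, hbkk]
      · simp [hj]
    rw [Finset.sum_congr rfl h1, Finset.sum_add_distrib, Finset.sum_ite_eq']
    simp
  have hE : ∀ ε : ℤ, ∀ i, ((Emat h B k ε)ᵀ *ᵥ a) i
      = if i = kc then -(a kc) + ∑ j, pp (-(ε * B j k)) * a j else a i := by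
    intro ε i
    rw [Matrix.mulVec]
    simp only [Matrix.transpose_apply, dotProduct, Emat, Matrix.of_apply]
    by_cases hi : i = kc
    · rw [if_pos hi]
      calc ∑ j, (if i = kc then (if j = kc then (-1:ℤ) else pp (-(ε * B j k)))
              else if j = i then 1 else 0) * a j
          = ∑ j, (if j = kc then (-1:ℤ) else pp (-(ε * B j k))) * a j :=
            Finset.sum_congr rfl fun j _ => by rw [if_pos hi]
        _ = -(a kc) + ∑ j, pp (-(ε * B j k)) * a j := hsum ε
    · rw [if_neg hi]
      calc ∑ j, (if i = kc then (if j = kc then (-1:ℤ) else pp (-(ε * B j k)))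
              else if j = i then 1 else 0) * a j
          = ∑ j, (if j = i then (1:ℤ) else 0) * a j :=
            Finset.sum_congr rfl fun j _ => by rw [if_neg hi]
        _ = a i := by simp
  have hdiff : (∑ j, pp (B j k) * a j) - (∑ j, pp (-(B j k)) * a j)
      = ∑ j, B j k * a j := by
    rw [← Finset.sum_sub_distrib]
    refine Finset.sum_congr rfl fun j _ => ?_
    rw [← sub_mul]
    congr 1
    unfold pp
    rcases le_total (B j k) 0 with hb | hb
    · rw [max_eq_right hb, max_eq_left (by omega)]; ring
    · rw [max_eq_left hb, max_eq_right (by omega)]; ring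
  have hm1 : ∀ j : Fin m, pp (-((-1:ℤ) * B j k)) = pp (B j k) := fun j => by
    congr 1; ring
  have hp1 : ∀ j : Fin m, pp (-((1:ℤ) * B j k)) = pp (-(B j k)) := fun j => by
    congr 1; ring
  have key : xTrop h B k a
      = (Emat h B k (if 0 ≤ ∑ j, B j k * a j then -1 else 1))ᵀ *ᵥ a := by
    funext i
    rw [hE, xTrop]
    by_cases hi : i = kc
    · rw [if_pos hi, if_pos hi, hi]
      congr 1
      by_cases h0 : 0 ≤ ∑ j, B j k * a j
      · rw [if_pos h0]
        simp only [hm1]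
        exact max_eq_left (by linarith)
      · rw [if_neg h0]
        simp only [hp1]
        exact max_eq_right (by linarith)
    · rw [if_neg hi, if_neg hi]
  constructor <;> intro hh <;> rw [hh]
  · exact key
  · exact key.symm

end ClusterF
end

section
/- Single-mutation form of Proposition 4.3: let B̃^sq = (B̃ | M) be an m×m integer matrix whose leftmost n columns form a mutation matrix B̃ = (b_{ij}), and let S̃ = diag(s₁,…,s_m) be a diagonal integer matrix with all sᵢ > 0 such that S̃(B̃^sq)ᵀ is skew-symmetric. Let k ∈ {1,…,n}, let a ∈ ℤ^m, let a' be the X-tropical mutation of a in direction k with respect to B̃, and let (B̃')^sq be the matrix obtained from B̃^sq by applying the entrywise mutation formula in direction k. Set g := S̃(B̃^sq)ᵀ a and g' := S̃((B̃')^sq)ᵀ a'. Then g' is the Y-tropical mutation of g in direction k with respect to B̃; equivalently, g' = E_{k,ε(g_k)}^{B̃} g, where ε(g_k) = - if g_k ≥ 0 and ε(g_k) = + if g_k < 0. -/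
open Matrix BigOperators

namespace ClusterF

variable {m n : ℕ}

/-- The entrywise mutation formula in direction k (with k ∈ {1,…,n}) applied to an
m×m matrix. -/
def mutSq (h : n ≤ m) (C : Matrix (Fin m) (Fin m) ℤ) (k : Fin n) :
    Matrix (Fin m) (Fin m) ℤ :=
  Matrix.of fun i j =>
    if i = Fin.castLE h k ∨ j = Fin.castLE h k then -(C i j)
    else C i j + pp (C i (Fin.castLE h k)) * pp (C (Fin.castLE h k) j)
      - pp (-(C i (Fin.castLE h k))) * pp (-(C (Fin.castLE h k) j))


lemma max_eq_pp_add (P N : ℤ) : max P N = pp (P - N) + N := by unfold pp; omega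

lemma pp_pos_mul {t : ℤ} (ht : 0 < t) (x : ℤ) : pp (t * x) = t * pp x := by
  unfold pp; rw [mul_max_of_nonneg _ _ ht.le, mul_zero]

lemma pp_of_nonneg_s14 {x : ℤ} (hx : 0 ≤ x) : pp x = x := by unfold pp; omega

lemma pp_of_neg {x : ℤ} (hx : x < 0) : pp x = 0 := by unfold pp; omega

lemma key (s t b c P N : ℤ) (hs : 0 < s) (ht : 0 < t) (hrel : t * c = -(s * b)) :
    t * pp c * P - t * pp (-c) * N - t * c * max P N
      = pp (-b) * (s * (P - N)) - (-b) * pp (s * (P - N)) := by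
  have h1 : t * pp c = s * pp (-b) := by
    rw [← pp_pos_mul ht, ← pp_pos_mul hs, hrel]; congr 1; ring
  have h2 : t * pp (-c) = s * pp b := by
    rw [← pp_pos_mul ht, ← pp_pos_mul hs, show t * -c = s * b by linarith]
  have h3 : pp (s * (P - N)) = s * pp (P - N) := pp_pos_mul hs _
  have h4 : max P N = pp (P - N) + N := max_eq_pp_add P N
  have h5 : pp b - pp (-b) = b := pp_sub b
  rw [h3, h4]
  linear_combination P * h1 - N * h2 - (pp (P - N) + N) * hrel - s * N * h5

lemma main_aux {m : ℕ} (St : Fin m → ℤ) (hSt : ∀ i, 0 < St i)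
    (C C' : Matrix (Fin m) (Fin m) ℤ) (K : Fin m)
    (skew : ∀ i j, St j * C i j = -(St i * C j i))
    (hmut : ∀ i j, C' i j = if i = K ∨ j = K then -(C i j)
      else C i j + pp (C i K) * pp (C K j) - pp (-(C i K)) * pp (-(C K j)))
    (a a' g g' : Fin m → ℤ) (P N : ℤ)
    (hPdef : P = ∑ j, pp (C j K) * a j) (hNdef : N = ∑ j, pp (-(C j K)) * a j)
    (haK : a' K = -(a K) + max P N) (haj : ∀ j, j ≠ K → a' j = a j)
    (hgdef : ∀ i, g i = ∑ j, St i * C j i * a j)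
    (hg'def : ∀ i, g' i = ∑ j, St i * C' j i * a' j) :
    ∀ i, g' i = if i = K then -(g K)
      else g i + pp (-(C i K)) * g K - (-(C i K)) * pp (g K) := by
  have hCKK : C K K = 0 := by
    have h1 := skew K K
    have h2 : St K * C K K = 0 := by linarith
    rcases mul_eq_zero.mp h2 with h' | h'
    · exact absurd h' (hSt K).ne'
    · exact h'
  have hgK : g K = St K * (P - N) := by
    rw [hgdef K, hPdef, hNdef, mul_sub, Finset.mul_sum, Finset.mul_sum,
      ← Finset.sum_sub_distrib]
    refine Finset.sum_congr rfl fun j _ => ?_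
    linear_combination -(St K * a j) * pp_sub (C j K)
  intro i
  by_cases hi : i = K
  · subst hi
    rw [if_pos rfl, hg'def, hgdef, ← Finset.sum_neg_distrib]
    refine Finset.sum_congr rfl fun j _ => ?_
    by_cases hj : j = i
    · subst hj; rw [hmut]; simp [hCKK]
    · rw [hmut, haj j hj, if_pos (Or.inr rfl)]; ring
  · rw [if_neg hi, hg'def i, ← Finset.sum_erase_add _ _ (Finset.mem_univ K)]
    have hPe : ∑ j ∈ Finset.univ.erase K, pp (C j K) * a j = P := by
      rw [hPdef, ← Finset.sum_erase_add _ _ (Finset.mem_univ K), hCKK]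
      simp [pp]
    have hNe : ∑ j ∈ Finset.univ.erase K, pp (-(C j K)) * a j = N := by
      rw [hNdef, ← Finset.sum_erase_add _ _ (Finset.mem_univ K), hCKK]
      simp [pp]
    have hge : ∑ j ∈ Finset.univ.erase K, St i * C j i * a j
        = g i - St i * C K i * a K := by
      rw [hgdef i, ← Finset.sum_erase_add _ _ (Finset.mem_univ K)]; ring
    have e1 : ∑ j ∈ Finset.univ.erase K, St i * C' j i * a' j
        = (g i - St i * C K i * a K)
          + St i * pp (C K i) * P - St i * pp (-(C K i)) * N := by
      have hterm : ∀ j ∈ Finset.univ.erase K, St i * C' j i * a' j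
          = St i * C j i * a j + St i * pp (C K i) * (pp (C j K) * a j)
            - St i * pp (-(C K i)) * (pp (-(C j K)) * a j) := by
        intro j hj
        have hj' : j ≠ K := Finset.ne_of_mem_erase hj
        rw [hmut, haj j hj', if_neg (by simp [hi, hj'])]
        ring
      rw [Finset.sum_congr rfl hterm]
      rw [Finset.sum_sub_distrib, Finset.sum_add_distrib, ← Finset.mul_sum,
        ← Finset.mul_sum, hPe, hNe, hge]
    rw [e1, hmut K i, if_pos (Or.inl rfl), haK, hgK]
    have hrel : St i * C K i = -(St K * C i K) := skew K i
    have := key (St K) (St i) (C i K) (C K i) P N (hSt K) (hSt i) hrel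
    linear_combination this

/-- Let B̃^sq = (B̃ | M) be an m×m matrix whose leftmost n columns form the
mutation matrix B̃, and let S̃ be a positive diagonal integer matrix with S̃(B̃^sq)ᵀ
skew-symmetric. If a' is the X-tropical mutation of a in direction k, B̃'^sq is the
entrywise mutation of B̃^sq in direction k, g = S̃(B̃^sq)ᵀ a and g' = S̃((B̃')^sq)ᵀ a',
then g' is the Y-tropical mutation of g in direction k; equivalently
g' = E_{k,ε(g_k)}^{B̃} g. -/
theorem stmt14 {m n : ℕ} (h : n ≤ m) (B : Matrix (Fin m) (Fin n) ℤ)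
    (hB : IsMutationMatrix h B)
    (Bsq : Matrix (Fin m) (Fin m) ℤ)
    (hleft : ∀ (i : Fin m) (j : Fin n), Bsq i (Fin.castLE h j) = B i j)
    (St : Fin m → ℤ) (hSt : ∀ i, 0 < St i)
    (hskew : (Matrix.diagonal St * Bsqᵀ)ᵀ = -(Matrix.diagonal St * Bsqᵀ))
    (k : Fin n) (a a' g g' : Fin m → ℤ)
    (ha' : a' = xTrop h B k a)
    (hg : g = (Matrix.diagonal St * Bsqᵀ) *ᵥ a)
    (hg' : g' = (Matrix.diagonal St * (mutSq h Bsq k)ᵀ) *ᵥ a') :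
    g' = yTrop h B k g ∧
      g' = Emat h B k (if 0 ≤ g (Fin.castLE h k) then -1 else 1) *ᵥ g := by
  have skew : ∀ i j, St j * Bsq i j = -(St i * Bsq j i) := by
    intro i j
    have := congrFun (congrFun hskew i) j
    simpa [Matrix.diagonal_mul] using this
  have hmut : ∀ i j, (mutSq h Bsq k) i j
      = if i = Fin.castLE h k ∨ j = Fin.castLE h k then -(Bsq i j)
        else Bsq i j + pp (Bsq i (Fin.castLE h k)) * pp (Bsq (Fin.castLE h k) j)
          - pp (-(Bsq i (Fin.castLE h k))) * pp (-(Bsq (Fin.castLE h k) j)) :=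
    fun i j => rfl
  have hPdef : (∑ j, pp (B j k) * a j) = ∑ j, pp (Bsq j (Fin.castLE h k)) * a j :=
    Finset.sum_congr rfl fun j _ => by rw [hleft]
  have hNdef : (∑ j, pp (-(B j k)) * a j) = ∑ j, pp (-(Bsq j (Fin.castLE h k))) * a j :=
    Finset.sum_congr rfl fun j _ => by rw [hleft]
  have haK : a' (Fin.castLE h k) = -(a (Fin.castLE h k))
      + max (∑ j, pp (B j k) * a j) (∑ j, pp (-(B j k)) * a j) := by
    rw [ha']; simp [xTrop]
  have haj : ∀ j, j ≠ Fin.castLE h k → a' j = a j := by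
    intro j hj; rw [ha']; simp [xTrop, hj]
  have hgdef : ∀ i, g i = ∑ j, St i * Bsq j i * a j := by
    intro i; rw [hg]; simp [Matrix.mulVec, dotProduct, Matrix.diagonal_mul]
  have hg'def : ∀ i, g' i = ∑ j, St i * (mutSq h Bsq k) j i * a' j := by
    intro i; rw [hg']; simp [Matrix.mulVec, dotProduct, Matrix.diagonal_mul]
  have haux := main_aux St hSt Bsq (mutSq h Bsq k) (Fin.castLE h k) skew hmut
    a a' g g' _ _ hPdef hNdef haK haj hgdef hg'def
  have goal1 : g' = yTrop h B k g := by
    funext i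
    rw [haux i]
    by_cases hi : i = Fin.castLE h k <;> simp [yTrop, hi, hleft]
  refine ⟨goal1, ?_⟩
  set ε : ℤ := if 0 ≤ g (Fin.castLE h k) then -1 else 1 with hε
  have Esum : ∀ i, (Emat h B k ε *ᵥ g) i
      = if i = Fin.castLE h k then -(g (Fin.castLE h k))
        else pp (-(ε * B i k)) * g (Fin.castLE h k) + g i := by
    intro i
    by_cases hi : i = Fin.castLE h k
    · rw [if_pos hi]
      have hterm : ∀ j, Emat h B k ε i j * g j
          = if j = Fin.castLE h k then -(g (Fin.castLE h k)) else 0 := by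
        intro j
        by_cases hj : j = Fin.castLE h k
        · subst hj; simp [Emat, hi]
        · have hij : ¬ i = j := by rw [hi]; exact fun hh => hj hh.symm
          simp [Emat, hj, hij]
      calc (Emat h B k ε *ᵥ g) i = ∑ j, Emat h B k ε i j * g j := by
            simp [Matrix.mulVec, dotProduct]
        _ = ∑ j, (if j = Fin.castLE h k then -(g (Fin.castLE h k)) else 0) :=
            Finset.sum_congr rfl fun j _ => hterm j
        _ = -(g (Fin.castLE h k)) := by simp
    · rw [if_neg hi]
      have hterm : ∀ j, Emat h B k ε i j * g j
          = (if j = Fin.castLE h k then pp (-(ε * B i k)) * g (Fin.castLE h k) else 0)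
            + (if j = i then g i else 0) := by
        intro j
        by_cases hj : j = Fin.castLE h k
        · subst hj; simp [Emat, hi, Ne.symm hi]
        · by_cases hji : j = i
          · subst hji; simp [Emat, hi, hj]
          · simp [Emat, hj, hji, Ne.symm hji]
      calc (Emat h B k ε *ᵥ g) i = ∑ j, Emat h B k ε i j * g j := by
            simp [Matrix.mulVec, dotProduct]
        _ = ∑ j, ((if j = Fin.castLE h k then pp (-(ε * B i k)) * g (Fin.castLE h k) else 0)
              + (if j = i then g i else 0)) :=
            Finset.sum_congr rfl fun j _ => hterm j
        _ = pp (-(ε * B i k)) * g (Fin.castLE h k) + g i := by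
            rw [Finset.sum_add_distrib]; simp
  funext i
  rw [Esum i, haux i]
  by_cases hi : i = Fin.castLE h k
  · rw [if_pos hi, if_pos hi]
  · rw [if_neg hi, if_neg hi, hleft i k]
    by_cases hsgn : 0 ≤ g (Fin.castLE h k)
    · rw [hε, if_pos hsgn, show -((-1 : ℤ) * B i k) = B i k by ring, pp_of_nonneg_s14 hsgn]
      linear_combination -(g (Fin.castLE h k)) * pp_sub (B i k)
    · push_neg at hsgn
      rw [hε, if_neg (not_le.mpr hsgn), show -((1 : ℤ) * B i k) = -(B i k) by ring,
        pp_of_neg hsgn]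
      ring


end ClusterF
end

section
/- Single-mutation form of Lemma 4.21 (sums of compatible tropical points): let B̃ = (b_{ij}) be an m×n mutation matrix, k ∈ {1,…,n}, and let g, h ∈ ℤ^m satisfy g_k · h_k ≥ 0. If g' is the Y-tropical mutation of g in direction k and h' is the Y-tropical mutation of h in direction k, then g' + h' is the Y-tropical mutation of g + h in direction k. -/
open Matrix BigOperators

namespace ClusterF

variable {m n : ℕ}

/-- If g_k · h_k ≥ 0, then the Y-tropical mutation of g + h in direction k
is the sum of the Y-tropical mutations of g and h in direction k. -/
theorem stmt16 {m n : ℕ} (h : n ≤ m) (B : Matrix (Fin m) (Fin n) ℤ)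
    (hB : IsMutationMatrix h B) (k : Fin n) (g g₂ : Fin m → ℤ)
    (hsign : 0 ≤ g (Fin.castLE h k) * g₂ (Fin.castLE h k)) :
    yTrop h B k (g + g₂) = yTrop h B k g + yTrop h B k g₂ := by
  have key : pp (g (Fin.castLE h k) + g₂ (Fin.castLE h k))
      = pp (g (Fin.castLE h k)) + pp (g₂ (Fin.castLE h k)) := by
    set a := g (Fin.castLE h k); set b := g₂ (Fin.castLE h k)
    rcases le_or_gt 0 a with ha | ha
    · rcases le_or_gt 0 b with hb | hb
      · simp [pp, max_eq_left, ha, hb, add_nonneg ha hb]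
      · have ha0 : a = 0 := by nlinarith
        simp [pp, ha0, le_of_lt hb, max_eq_right hb.le]
    · have hb : b ≤ 0 := by nlinarith
      simp [pp, max_eq_right, ha.le, hb, add_nonpos ha.le hb]
  funext i
  by_cases hi : i = Fin.castLE h k
  · simp [yTrop, hi]; ring
  · simp only [yTrop, Pi.add_apply, if_neg hi, key]; ring

end ClusterF
end
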